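/- Every positive integer n has as many partitions with λ₁ < λ₂ + λ_m and 2λ₂ < λ₁ + λ₃ (dimension ≥ 3, with the dimension-2 analogue λ₁ < 2λ₂, 2λ₁ > 3λ₂) as partitions with λ₁ < λ₂ + λ_m and k₁ > k_m. -/

import Mathlib

/-- A partition `(λ₁,...,λ_m)×[k₁,...,k_m]`: strictly decreasing positive parts
with positive multiplicities, same length. -/
def IsPart (p : List ℕ × List ℕ) : Prop :=
  p.1.length = p.2.length ∧ List.Chain' (· > ·) p.1 ∧
  (∀ x ∈ p.1, 0 < x) ∧ (∀ x ∈ p.2, 0 < x)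

/-- size of a partition: Σ kᵢ λᵢ -/
def psize (p : List ℕ × List ℕ) : ℕ := (List.zipWith (· * ·) p.1 p.2).sum

def parts1 (L : List ℕ) : ℕ := L.headD 0      -- λ₁
def parts2 (L : List ℕ) : ℕ := L.tail.headD 0 -- λ₂
def parts3 (L : List ℕ) : ℕ := L.tail.tail.headD 0 -- λ₃
def partsLast (L : List ℕ) : ℕ := L.getLastD 0 -- λ_m
def partsPrelast (L : List ℕ) : ℕ := L.dropLast.getLastD 0 -- λ_{m-1}

def T0parts : List ℕ → List ℕ
  | a :: b :: t => b :: (t ++ [a - b])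
  | l => l

def T0mults : List ℕ → List ℕ
  | a :: b :: t => (a + b) :: (t ++ [a])
  | l => l

def T1parts (L : List ℕ) : List ℕ := (parts1 L - partsLast L) :: L.tail

def T1mults (K : List ℕ) : List ℕ := K.dropLast ++ [K.headD 0 + K.getLastD 0]

def TDparts (L : List ℕ) : List ℕ := L.tail

def TDmults : List ℕ → List ℕ
  | [a, b] => [2 * a + b]
  | a :: b :: t => (a + b) :: (t.dropLast ++ [a + t.getLastD 0])
  | l => l

def T0map (p : List ℕ × List ℕ) : List ℕ × List ℕ := (T0parts p.1, T0mults p.2)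
def T1map (p : List ℕ × List ℕ) : List ℕ × List ℕ := (T1parts p.1, T1mults p.2)

/-- △₀ : partitions of dimension ≥ 2 with λ₁ < λ₂ + λ_m -/
def Tri0 : Set (List ℕ × List ℕ) :=
  {p | IsPart p ∧ 2 ≤ p.1.length ∧ parts1 p.1 < parts2 p.1 + partsLast p.1}

/-- △₁ : partitions of dimension ≥ 2 with λ₁ > λ₂ + λ_m -/
def Tri1 : Set (List ℕ × List ℕ) :=
  {p | IsPart p ∧ 2 ≤ p.1.length ∧ parts2 p.1 + partsLast p.1 < parts1 p.1}

/-- M₀ : partitions of dimension ≥ 2 with k₁ > k_m -/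
def M0 : Set (List ℕ × List ℕ) :=
  {p | IsPart p ∧ 2 ≤ p.1.length ∧ p.2.getLastD 0 < p.2.headD 0}

/-- M₁ : partitions of dimension ≥ 2 with k₁ < k_m -/
def M1 : Set (List ℕ × List ℕ) :=
  {p | IsPart p ∧ 2 ≤ p.1.length ∧ p.2.headD 0 < p.2.getLastD 0}

/-- △_d^G : partitions with λ₂ + dλ_m < λ₁ < λ₂ + (d+1)λ_m -/
def GaussSet (d : ℕ) : Set (List ℕ × List ℕ) :=
  {p | IsPart p ∧ 2 ≤ p.1.length ∧
    parts2 p.1 + d * partsLast p.1 < parts1 p.1 ∧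
    parts1 p.1 < parts2 p.1 + (d + 1) * partsLast p.1}

/-!
`T₀` is a size-preserving bijection from `△₀` onto `M₀`: the condition `λ₁ < λ₂ + λ_m` is exactly
what makes `λ₁ - λ₂` a new smallest part, and `k₁ + k₂ > k₁` puts the image in `M₀`. Its inverse
sends `(μ₁,…,μ_m)×[j₁,…,j_m]` to `(μ₁ + μ_m, μ₁,…,μ_{m-1})×[j_m, j₁ - j_m, j₂,…,j_{m-1}]`.
So `T₀` restricts to a bijection from `△₀₀ = △₀ ∩ T₀⁻¹(△₀)` onto `△₀ ∩ M₀`, and unfolding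
`T₀(λ) ∈ △₀` gives `2λ₂ < λ₁ + λ₃`, or `3λ₂ < 2λ₁` when `m = 2`.
-/

def T0inv (q : List ℕ × List ℕ) : List ℕ × List ℕ :=
  ((q.1.headD 0 + q.1.getLastD 0) :: q.1.dropLast,
   q.2.getLastD 0 :: (q.2.headD 0 - q.2.getLastD 0) :: q.2.tail.dropLast)

def Tri00 : Set (List ℕ × List ℕ) := {p | p ∈ Tri0 ∧ T0map p ∈ Tri0}

section PartitionLists

variable {a b c k k' k₁ k₂ j : ℕ} {L K t ks : List ℕ}

theorem isPart_cons :
    IsPart (a :: L, k :: K) ↔ IsPart (L, K) ∧ (∀ b ∈ L.head?, b < a) ∧ 0 < a ∧ 0 < k := by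
  simp only [IsPart, List.Chain', List.isChain_cons, List.length_cons, List.mem_cons,
    forall_eq_or_imp, Nat.add_right_cancel_iff, gt_iff_lt]
  tauto

theorem isPart_append_singleton :
    IsPart (L ++ [c], K ++ [k]) ↔ IsPart (L, K) ∧ (∀ b ∈ L.getLast?, c < b) ∧ 0 < c ∧ 0 < k := by
  simp only [IsPart, List.Chain', List.isChain_append, List.length_append, List.mem_append,
    List.mem_singleton, List.length_singleton, Nat.add_right_cancel_iff, List.head?_cons,
    Option.mem_def, Option.some.injEq, forall_eq, forall_eq', List.isChain_singleton, or_imp,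
    forall_and, gt_iff_lt, true_and]
  tauto

theorem IsPart.lt_of_cons_cons (h : IsPart (a :: b :: t, K)) : b < a :=
  (List.isChain_cons_cons.1 h.2.1).1

theorem IsPart.replace_headMult (h : IsPart (L, k :: K)) (hk' : 0 < k') : IsPart (L, k' :: K) := by
  obtain ⟨hlen, hchain, hparts, hmults⟩ := h
  refine ⟨by simpa using hlen, hchain, hparts, ?_⟩
  simp only [List.mem_cons, forall_eq_or_imp] at hmults ⊢
  exact ⟨hk', hmults.2⟩

@[simp]
theorem psize_cons : psize (a :: L, k :: K) = a * k + psize (L, K) := by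
  simp [psize]

theorem psize_append_singleton (h : L.length = K.length) :
    psize (L ++ [c], K ++ [k]) = psize (L, K) + c * k := by
  simp [psize, List.zipWith_append h]

theorem IsPart.exists_eq_cons_cons {p : List ℕ × List ℕ} (hp : IsPart p) (h2 : 2 ≤ p.1.length) :
    ∃ a b t k₁ k₂ ks, p = (a :: b :: t, k₁ :: k₂ :: ks) := by
  obtain ⟨_ | ⟨a, _ | ⟨b, t⟩⟩, _ | ⟨k₁, _ | ⟨k₂, ks⟩⟩⟩ := p <;> simp_all [IsPart]

theorem IsPart.exists_eq_cons_append {p : List ℕ × List ℕ} (hp : IsPart p) (h2 : 2 ≤ p.1.length) :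
    ∃ b t c j ks k, p = (b :: (t ++ [c]), j :: (ks ++ [k])) := by
  obtain ⟨a, b, t, k₁, k₂, ks, rfl⟩ := hp.exists_eq_cons_cons h2
  obtain h | ⟨t', c, ht⟩ := List.eq_nil_or_concat' (b :: t)
  · simp at h
  obtain h | ⟨ks', k, hks⟩ := List.eq_nil_or_concat' (k₂ :: ks)
  · simp at h
  exact ⟨a, t', c, k₁, ks', k, by rw [ht, hks]⟩

theorem getLast?_eq_some_partsLast : (b :: t).getLast? = some (partsLast (a :: b :: t)) := by
  rw [List.getLast?_cons, partsLast, List.getLastD_cons, List.getLastD_cons,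
    List.getLastD_eq_getLast?]

theorem partsLast_eq_parts2 (h : L.length = 2) : partsLast L = parts2 L := by
  match L, h with
  | [_, _], _ => rfl

theorem T0map_cons_cons :
    T0map (a :: b :: t, k₁ :: k₂ :: ks) = ((b :: t) ++ [a - b], ((k₁ + k₂) :: ks) ++ [k₁]) :=
  rfl

theorem T0inv_cons_append :
    T0inv (b :: (t ++ [c]), j :: (ks ++ [k])) = ((b + c) :: b :: t, k :: (j - k) :: ks) := by
  simp only [T0inv, List.headD_cons, List.tail_cons, List.dropLast_concat]
  rw [← List.cons_append, ← List.cons_append, List.getLastD_concat, List.getLastD_concat,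
    List.dropLast_concat]

end PartitionLists

section T0

variable {p q : List ℕ × List ℕ}

theorem T0map_mem_M0_and_psize_eq (hp : p ∈ Tri0) :
    T0map p ∈ M0 ∧ psize (T0map p) = psize p := by
  obtain ⟨hpart, hlen, htri⟩ := hp
  obtain ⟨a, b, t, k₁, k₂, ks, rfl⟩ := hpart.exists_eq_cons_cons hlen
  have hba : b < a := hpart.lt_of_cons_cons
  obtain ⟨htail, -, -, hk₁⟩ := isPart_cons.1 hpart
  obtain ⟨-, -, -, hk₂⟩ := isPart_cons.1 htail
  have hpart' : IsPart (T0map (a :: b :: t, k₁ :: k₂ :: ks)) := by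
    rw [T0map_cons_cons, isPart_append_singleton]
    refine ⟨htail.replace_headMult (by omega), fun x hx => ?_, by omega, hk₁⟩
    rw [getLast?_eq_some_partsLast (a := a), Option.mem_some_iff] at hx
    simp only [parts1, parts2, List.headD_cons, List.tail_cons] at htri
    omega
  have hmult : k₁ < k₁ + k₂ := by omega
  refine ⟨⟨hpart', by simp [T0map_cons_cons], ?_⟩, ?_⟩
  · simpa only [T0map_cons_cons, List.cons_append, List.getLastD_cons, List.getLastD_concat,
      List.headD_cons] using hmult
  · rw [T0map_cons_cons, psize_append_singleton (by simpa using htail.1), psize_cons, psize_cons,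
      psize_cons]
    zify [hba.le]
    ring

theorem T0inv_mem_Tri0_and_psize_eq (hq : q ∈ M0) :
    T0inv q ∈ Tri0 ∧ psize (T0inv q) = psize q := by
  obtain ⟨hpart, hlen, hmult⟩ := hq
  obtain ⟨b, t, c, j, ks, k, rfl⟩ := hpart.exists_eq_cons_append hlen
  rw [← List.cons_append, ← List.cons_append] at hpart
  obtain ⟨hinit, hlast, hc, hk⟩ := isPart_append_singleton.1 hpart
  have hkj : k < j := by
    simpa only [List.getLastD_cons, List.getLastD_concat, List.headD_cons] using hmult
  have hcx : c < partsLast ((b + c) :: b :: t) := hlast _ getLast?_eq_some_partsLast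
  have hpart' : IsPart ((b + c) :: b :: t, k :: (j - k) :: ks) :=
    isPart_cons.2 ⟨hinit.replace_headMult (by omega), by simpa using hc, by omega, hk⟩
  rw [T0inv_cons_append]
  refine ⟨⟨hpart', by simp, ?_⟩, ?_⟩
  · simp only [parts1, parts2, List.headD_cons, List.tail_cons]
    omega
  · rw [← List.cons_append, ← List.cons_append, psize_append_singleton (by simpa using hinit.1),
      psize_cons, psize_cons, psize_cons]
    zify [hkj.le]
    ring

theorem T0inv_T0map (hp : p ∈ Tri0) : T0inv (T0map p) = p := by
  obtain ⟨hpart, hlen, -⟩ := hp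
  obtain ⟨a, b, t, k₁, k₂, ks, rfl⟩ := hpart.exists_eq_cons_cons hlen
  rw [T0map_cons_cons, List.cons_append, List.cons_append, T0inv_cons_append,
    Nat.add_sub_cancel' hpart.lt_of_cons_cons.le, Nat.add_sub_cancel_left]

theorem T0map_T0inv (hq : q ∈ M0) : T0map (T0inv q) = q := by
  obtain ⟨hpart, hlen, hmult⟩ := hq
  obtain ⟨b, t, c, j, ks, k, rfl⟩ := hpart.exists_eq_cons_append hlen
  have hkj : k < j := by
    simpa only [List.getLastD_cons, List.getLastD_concat, List.headD_cons] using hmult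
  rw [T0inv_cons_append, T0map_cons_cons, Nat.add_sub_cancel_left, Nat.add_sub_cancel' hkj.le,
    List.cons_append, List.cons_append]

theorem bijOn_T0map (n : ℕ) :
    Set.BijOn T0map {p | p ∈ Tri00 ∧ psize p = n} {q | q ∈ Tri0 ∧ q ∈ M0 ∧ psize q = n} := by
  refine Set.InvOn.bijOn (f' := T0inv)
    ⟨fun p hp => T0inv_T0map hp.1.1, fun q hq => T0map_T0inv hq.2.1⟩ ?_ ?_
  · rintro p ⟨⟨hp, hTp⟩, rfl⟩
    exact ⟨hTp, T0map_mem_M0_and_psize_eq hp⟩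
  · rintro q ⟨hqTri, hq, rfl⟩
    refine ⟨⟨(T0inv_mem_Tri0_and_psize_eq hq).1, ?_⟩, (T0inv_mem_Tri0_and_psize_eq hq).2⟩
    rw [T0map_T0inv hq]
    exact hqTri

theorem T0map_mem_Tri0_iff (hp : p ∈ Tri0) :
    T0map p ∈ Tri0 ↔ (3 ≤ p.1.length ∧ 2 * parts2 p.1 < parts1 p.1 + parts3 p.1) ∨
      (p.1.length = 2 ∧ 3 * parts2 p.1 < 2 * parts1 p.1) := by
  have hpart' := (T0map_mem_M0_and_psize_eq hp).1.1
  obtain ⟨hpart, hlen, -⟩ := hp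
  obtain ⟨a, b, t, k₁, k₂, ks, rfl⟩ := hpart.exists_eq_cons_cons hlen
  have hba : b < a := hpart.lt_of_cons_cons
  simp only [Tri0, Set.mem_ofPred_eq, hpart', true_and]
  rcases t with _ | ⟨c, t⟩ <;>
    simp only [T0map_cons_cons, parts1, parts2, parts3, partsLast, List.headD_cons,
      List.tail_cons, List.getLastD_cons, List.getLastD_concat, List.cons_append,
      List.nil_append, List.length_cons, List.length_nil, List.getLastD_nil, List.headD_nil,
      true_and] <;>
    omega

theorem mem_Tri00_iff : p ∈ Tri00 ↔ IsPart p ∧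
    ((3 ≤ p.1.length ∧ parts1 p.1 < parts2 p.1 + partsLast p.1 ∧
        2 * parts2 p.1 < parts1 p.1 + parts3 p.1) ∨
     (p.1.length = 2 ∧ parts1 p.1 < 2 * parts2 p.1 ∧ 3 * parts2 p.1 < 2 * parts1 p.1)) := by
  have hlast := @partsLast_eq_parts2 p.1
  constructor
  · rintro ⟨hp, hTp⟩
    have hcond := (T0map_mem_Tri0_iff hp).1 hTp
    obtain ⟨hpart, hlen, htri⟩ := hp
    exact ⟨hpart, by omega⟩
  · rintro ⟨hpart, hcond⟩
    have hp : p ∈ Tri0 := ⟨hpart, by omega, by omega⟩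
    exact ⟨hp, (T0map_mem_Tri0_iff hp).2 (by omega)⟩

end T0

theorem stmt13_general (n : ℕ) :
    {p : List ℕ × List ℕ | IsPart p ∧ psize p = n ∧
        ((3 ≤ p.1.length ∧ parts1 p.1 < parts2 p.1 + partsLast p.1 ∧
            2 * parts2 p.1 < parts1 p.1 + parts3 p.1) ∨
         (p.1.length = 2 ∧ parts1 p.1 < 2 * parts2 p.1 ∧
            3 * parts2 p.1 < 2 * parts1 p.1))}.ncard =
    {p : List ℕ × List ℕ | IsPart p ∧ 2 ≤ p.1.length ∧ psize p = n ∧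
        parts1 p.1 < parts2 p.1 + partsLast p.1 ∧
        p.2.getLastD 0 < p.2.headD 0}.ncard := by
  convert (bijOn_T0map n).ncard_eq using 2
  · ext p
    simp only [Set.mem_ofPred_eq, mem_Tri00_iff]
    tauto
  · ext q
    simp only [Set.mem_ofPred_eq, Tri0, M0]
    tauto

theorem stmt13 (n : ℕ) (hn : 0 < n) :
    {p : List ℕ × List ℕ | IsPart p ∧ psize p = n ∧
        ((3 ≤ p.1.length ∧ parts1 p.1 < parts2 p.1 + partsLast p.1 ∧
            2 * parts2 p.1 < parts1 p.1 + parts3 p.1) ∨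
         (p.1.length = 2 ∧ parts1 p.1 < 2 * parts2 p.1 ∧
            3 * parts2 p.1 < 2 * parts1 p.1))}.ncard =
    {p : List ℕ × List ℕ | IsPart p ∧ 2 ≤ p.1.length ∧ psize p = n ∧
        parts1 p.1 < parts2 p.1 + partsLast p.1 ∧
        p.2.getLastD 0 < p.2.headD 0}.ncard :=
  stmt13_general n
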